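/- Let G be a connected simple graph with n ≥ 2 vertices. Then M₂*(G) ≤ H(G) ≤ (n−1) · M₂*(G), with equality on the left if and only if G is isomorphic to the path P₂ (a single edge), and equality on the right if and only if G is isomorphic to the complete graph Kₙ. -/
import Mathlib


open Finset SimpleGraph

variable {V : Type*} [Fintype V] [DecidableEq V]

/-- The sum-connectivity index `X(G) = Σ_{uv ∈ E(G)} 1/√(d_u + d_v)`. -/
noncomputable def sumConnIndex (G : SimpleGraph V) [DecidableRel G.Adj] : ℝ :=
  ∑ e ∈ G.edgeFinset, Sym2.lift
    ⟨fun u v => 1 / Real.sqrt ((G.degree u : ℝ) + (G.degree v : ℝ)),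
     fun u v => by dsimp only; rw [add_comm ((G.degree u : ℝ)) ((G.degree v : ℝ))]⟩ e

/-- The Randić index `R(G) = Σ_{uv ∈ E(G)} 1/√(d_u d_v)`. -/
noncomputable def randicIndex (G : SimpleGraph V) [DecidableRel G.Adj] : ℝ :=
  ∑ e ∈ G.edgeFinset, Sym2.lift
    ⟨fun u v => 1 / Real.sqrt ((G.degree u : ℝ) * (G.degree v : ℝ)),
     fun u v => by dsimp only; rw [mul_comm ((G.degree u : ℝ)) ((G.degree v : ℝ))]⟩ e

/-- The harmonic index `H(G) = Σ_{uv ∈ E(G)} 2/(d_u + d_v)`. -/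
noncomputable def harmonicIndex (G : SimpleGraph V) [DecidableRel G.Adj] : ℝ :=
  ∑ e ∈ G.edgeFinset, Sym2.lift
    ⟨fun u v => 2 / ((G.degree u : ℝ) + (G.degree v : ℝ)),
     fun u v => by dsimp only; rw [add_comm ((G.degree u : ℝ)) ((G.degree v : ℝ))]⟩ e

/-- The atom-bond connectivity index `ABC(G) = Σ_{uv ∈ E(G)} √((d_u + d_v − 2)/(d_u d_v))`. -/
noncomputable def abcIndex (G : SimpleGraph V) [DecidableRel G.Adj] : ℝ :=
  ∑ e ∈ G.edgeFinset, Sym2.lift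
    ⟨fun u v => Real.sqrt (((G.degree u : ℝ) + (G.degree v : ℝ) - 2) /
        ((G.degree u : ℝ) * (G.degree v : ℝ))),
     fun u v => by dsimp only; rw [add_comm ((G.degree u : ℝ)) ((G.degree v : ℝ)),
        mul_comm ((G.degree u : ℝ)) ((G.degree v : ℝ))]⟩ e

/-- The first geometric-arithmetic index `GA(G) = Σ_{uv ∈ E(G)} 2√(d_u d_v)/(d_u + d_v)`. -/
noncomputable def geoArithIndex (G : SimpleGraph V) [DecidableRel G.Adj] : ℝ :=
  ∑ e ∈ G.edgeFinset, Sym2.lift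
    ⟨fun u v => 2 * Real.sqrt ((G.degree u : ℝ) * (G.degree v : ℝ)) /
        ((G.degree u : ℝ) + (G.degree v : ℝ)),
     fun u v => by dsimp only; rw [mul_comm ((G.degree u : ℝ)) ((G.degree v : ℝ)),
        add_comm ((G.degree u : ℝ)) ((G.degree v : ℝ))]⟩ e

/-- The augmented Zagreb index `AZI(G) = Σ_{uv ∈ E(G)} (d_u d_v/(d_u + d_v − 2))³`. -/
noncomputable def augZagrebIndex (G : SimpleGraph V) [DecidableRel G.Adj] : ℝ :=
  ∑ e ∈ G.edgeFinset, Sym2.lift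
    ⟨fun u v => ((G.degree u : ℝ) * (G.degree v : ℝ) /
        ((G.degree u : ℝ) + (G.degree v : ℝ) - 2)) ^ 3,
     fun u v => by dsimp only; rw [mul_comm ((G.degree u : ℝ)) ((G.degree v : ℝ)),
        add_comm ((G.degree u : ℝ)) ((G.degree v : ℝ))]⟩ e

/-- The modified second Zagreb index `M₂*(G) = Σ_{uv ∈ E(G)} 1/(d_u d_v)`. -/
noncomputable def modSecondZagrebIndex (G : SimpleGraph V) [DecidableRel G.Adj] : ℝ :=
  ∑ e ∈ G.edgeFinset, Sym2.lift
    ⟨fun u v => 1 / ((G.degree u : ℝ) * (G.degree v : ℝ)),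
     fun u v => by dsimp only; rw [mul_comm ((G.degree u : ℝ)) ((G.degree v : ℝ))]⟩ e

variable (G : SimpleGraph V) [DecidableRel G.Adj]

/- ### Auxiliary lemmas -/

private lemma rL1 {a b : ℝ} (ha : 1 ≤ a) (hb : 1 ≤ b) : 1 / (a * b) ≤ 2 / (a + b) := by
  rw [div_le_div_iff₀ (by positivity) (by positivity)]
  nlinarith

private lemma rL1eq {a b : ℝ} (ha : 1 ≤ a) (hb : 1 ≤ b) :
    1 / (a * b) = 2 / (a + b) ↔ a = 1 ∧ b = 1 := by
  constructor
  · intro h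
    rw [div_eq_div_iff (by positivity) (by positivity)] at h
    constructor <;>
      nlinarith [mul_nonneg (by linarith : (0:ℝ) ≤ a) (by linarith : (0:ℝ) ≤ b - 1),
        mul_nonneg (by linarith : (0:ℝ) ≤ b) (by linarith : (0:ℝ) ≤ a - 1),
        mul_nonneg (by linarith : (0:ℝ) ≤ a - 1) (by linarith : (0:ℝ) ≤ b - 1)]
  · rintro ⟨rfl, rfl⟩; norm_num

private lemma rL2 {a b c : ℝ} (ha : 1 ≤ a) (hb : 1 ≤ b) (hac : a ≤ c) (hbc : b ≤ c) :
    2 / (a + b) ≤ c * (1 / (a * b)) := by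
  rw [mul_one_div, div_le_div_iff₀ (by positivity) (by positivity)]
  nlinarith

private lemma rL2eq {a b c : ℝ} (ha : 1 ≤ a) (hb : 1 ≤ b) (hac : a ≤ c) (hbc : b ≤ c) :
    2 / (a + b) = c * (1 / (a * b)) ↔ a = c ∧ b = c := by
  rw [mul_one_div]
  constructor
  · intro h
    rw [div_eq_div_iff (by positivity) (by positivity)] at h
    constructor <;>
      nlinarith [mul_nonneg (by linarith : (0:ℝ) ≤ a) (by linarith : (0:ℝ) ≤ c - b),
        mul_nonneg (by linarith : (0:ℝ) ≤ b) (by linarith : (0:ℝ) ≤ c - a),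
        mul_nonneg (by linarith : (0:ℝ) ≤ b - 1) (by linarith : (0:ℝ) ≤ c - a),
        mul_nonneg (by linarith : (0:ℝ) ≤ a - 1) (by linarith : (0:ℝ) ≤ c - b)]
  · rintro ⟨rfl, rfl⟩
    have hb0 : (0:ℝ) < b := by linarith
    field_simp
    ring

private lemma aux_exists_adj {V : Type*} [Fintype V] (G : SimpleGraph V)
    (hG : G.Connected) (hc : 2 ≤ Fintype.card V) (u : V) : ∃ v, G.Adj u v := by
  obtain ⟨v, hv⟩ := Fintype.exists_ne_of_one_lt_card (by omega) u
  obtain ⟨p⟩ := hG.preconnected u v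
  cases p with
  | nil => exact absurd rfl hv
  | cons h q => exact ⟨_, h⟩

private lemma aux_degree_of_adj_ne {V : Type*} [Fintype V] [DecidableEq V]
    (G : SimpleGraph V) [DecidableRel G.Adj]
    (hadj : ∀ x y : V, G.Adj x y ↔ x ≠ y) (u : V) :
    G.degree u = Fintype.card V - 1 := by
  have h : G.neighborFinset u = Finset.univ.erase u := by
    ext w
    simp only [SimpleGraph.mem_neighborFinset, Finset.mem_erase, Finset.mem_univ, and_true,
      hadj u w]
    exact ne_comm
  rw [SimpleGraph.degree, h, Finset.card_erase_of_mem (Finset.mem_univ u), Finset.card_univ]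

private lemma aux_adj_ne_of_iso_complete {V W : Type*} [Fintype V] [DecidableEq V]
    (G : SimpleGraph V) (f : G ≃g completeGraph W) :
    ∀ x y : V, G.Adj x y ↔ x ≠ y := by
  intro x y
  rw [← f.map_rel_iff]
  simp only [completeGraph_eq_top, top_adj, ne_eq, EmbeddingLike.apply_eq_iff_eq]

theorem stmt12 (hG : G.Connected) (n : ℕ) (hn : Fintype.card V = n) (hn2 : 2 ≤ n) :
    modSecondZagrebIndex G ≤ harmonicIndex G ∧
    harmonicIndex G ≤ ((n : ℝ) - 1) * modSecondZagrebIndex G ∧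
    (modSecondZagrebIndex G = harmonicIndex G ↔ Nonempty (G ≃g pathGraph 2)) ∧
    (harmonicIndex G = ((n : ℝ) - 1) * modSecondZagrebIndex G ↔
      Nonempty (G ≃g completeGraph (Fin n))) := by
  subst hn
  -- basic degree facts
  have hd1 : ∀ u : V, (1:ℝ) ≤ (G.degree u : ℝ) := by
    intro u
    obtain ⟨v, hv⟩ := aux_exists_adj G hG hn2 u
    have : 0 < G.degree u := (G.degree_pos_iff_exists_adj u).2 ⟨v, hv⟩
    exact_mod_cast this
  have hdn : ∀ u : V, (G.degree u : ℝ) ≤ (Fintype.card V : ℝ) - 1 := by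
    intro u
    have h := G.degree_lt_card_verts u
    have : (G.degree u : ℝ) < (Fintype.card V : ℝ) := by exact_mod_cast h
    have h1 : G.degree u + 1 ≤ Fintype.card V := h
    have := (Nat.cast_le (α := ℝ)).2 h1
    push_cast at this
    linarith
  have hmem : ∀ {u v : V}, s(u,v) ∈ G.edgeFinset ↔ G.Adj u v := by
    intro u v
    rw [SimpleGraph.mem_edgeFinset, SimpleGraph.mem_edgeSet]
  -- pointwise inequalities
  have hle1 : ∀ e ∈ G.edgeFinset,
      Sym2.lift ⟨fun u v => 1 / ((G.degree u : ℝ) * (G.degree v : ℝ)),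
        fun u v => by dsimp only; rw [mul_comm ((G.degree u : ℝ)) ((G.degree v : ℝ))]⟩ e ≤
      Sym2.lift ⟨fun u v => 2 / ((G.degree u : ℝ) + (G.degree v : ℝ)),
        fun u v => by dsimp only; rw [add_comm ((G.degree u : ℝ)) ((G.degree v : ℝ))]⟩ e := by
    intro e he
    induction e using Sym2.ind with
    | _ u v =>
      simp only [Sym2.lift_mk]
      exact rL1 (hd1 u) (hd1 v)
  have hle2 : ∀ e ∈ G.edgeFinset,
      Sym2.lift ⟨fun u v => 2 / ((G.degree u : ℝ) + (G.degree v : ℝ)),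
        fun u v => by dsimp only; rw [add_comm ((G.degree u : ℝ)) ((G.degree v : ℝ))]⟩ e ≤
      ((Fintype.card V : ℝ) - 1) *
      Sym2.lift ⟨fun u v => 1 / ((G.degree u : ℝ) * (G.degree v : ℝ)),
        fun u v => by dsimp only; rw [mul_comm ((G.degree u : ℝ)) ((G.degree v : ℝ))]⟩ e := by
    intro e he
    induction e using Sym2.ind with
    | _ u v =>
      simp only [Sym2.lift_mk]
      exact rL2 (hd1 u) (hd1 v) (hdn u) (hdn v)
  have h1 : modSecondZagrebIndex G ≤ harmonicIndex G := Finset.sum_le_sum hle1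
  have h2 : harmonicIndex G ≤ ((Fintype.card V : ℝ) - 1) * modSecondZagrebIndex G := by
    unfold harmonicIndex modSecondZagrebIndex
    rw [Finset.mul_sum]
    exact Finset.sum_le_sum hle2
  refine ⟨h1, h2, ?_, ?_⟩
  · -- left equality case
    have hiff : modSecondZagrebIndex G = harmonicIndex G ↔
        ∀ u v : V, G.Adj u v → G.degree u = 1 ∧ G.degree v = 1 := by
      rw [show (modSecondZagrebIndex G = harmonicIndex G) ↔ _ from
        Finset.sum_eq_sum_iff_of_le hle1]
      constructor
      · intro h u v huv
        have := h s(u,v) (hmem.2 huv)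
        simp only [Sym2.lift_mk] at this
        obtain ⟨ha, hb⟩ := (rL1eq (hd1 u) (hd1 v)).1 this
        exact ⟨by exact_mod_cast ha, by exact_mod_cast hb⟩
      · intro h e he
        induction e using Sym2.ind with
        | _ u v =>
          obtain ⟨ha, hb⟩ := h u v (hmem.1 he)
          simp only [Sym2.lift_mk, ha, hb]
          norm_num
    rw [hiff]
    constructor
    · intro h
      have hne : Nonempty V := Fintype.card_pos_iff.mp (by omega)
      obtain ⟨u⟩ := hne
      obtain ⟨v, huv⟩ := aux_exists_adj G hG hn2 u
      -- neighbor sets are singletons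
      have hnu : G.neighborFinset u = {v} := by
        have hc1 : (G.neighborFinset u).card = 1 := (h u v huv).1
        obtain ⟨x, hx⟩ := Finset.card_eq_one.1 hc1
        have : v ∈ G.neighborFinset u := (SimpleGraph.mem_neighborFinset G u v).2 huv
        rw [hx] at this ⊢
        rw [Finset.mem_singleton] at this
        rw [this]
      have hnv : G.neighborFinset v = {u} := by
        have hc1 : (G.neighborFinset v).card = 1 := (h v u huv.symm).1
        obtain ⟨x, hx⟩ := Finset.card_eq_one.1 hc1
        have : u ∈ G.neighborFinset v := (SimpleGraph.mem_neighborFinset G v u).2 huv.symm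
        rw [hx] at this ⊢
        rw [Finset.mem_singleton] at this
        rw [this]
      have key : ∀ (a b : V), G.Walk a b → (a = u ∨ a = v) → (b = u ∨ b = v) := by
        intro a b p
        induction p with
        | nil => exact id
        | cons h' q ih =>
          intro hab
          apply ih
          rcases hab with rfl | rfl
          · right
            have hc' := (SimpleGraph.mem_neighborFinset G _ _).2 h'
            rw [hnu] at hc'
            exact Finset.mem_singleton.1 hc'
          · left
            have hc' := (SimpleGraph.mem_neighborFinset G _ _).2 h'
            rw [hnv] at hc'
            exact Finset.mem_singleton.1 hc' 
      have hV : ∀ w : V, w = u ∨ w = v := by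
        intro w
        obtain ⟨p⟩ := hG.preconnected u w
        exact key u w p (Or.inl rfl)
      have hcard2 : Fintype.card V = 2 := by
        have hsub : (Finset.univ : Finset V) ⊆ {u, v} := by
          intro w _
          rcases hV w with rfl | rfl
          · exact Finset.mem_insert_self _ _
          · exact Finset.mem_insert_of_mem (Finset.mem_singleton_self _)
        have hle : Fintype.card V ≤ 2 := by
          calc Fintype.card V = (Finset.univ : Finset V).card := (Finset.card_univ).symm
            _ ≤ ({u, v} : Finset V).card := Finset.card_le_card hsub
            _ ≤ 2 := Finset.card_insert_le _ _ |>.trans (by simp)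
        omega
      have hadjne : ∀ x y : V, G.Adj x y ↔ x ≠ y := by
        intro x y
        constructor
        · exact fun h' => h'.ne
        · intro hxy
          rcases hV x with rfl | rfl <;> rcases hV y with rfl | rfl
          · exact absurd rfl hxy
          · exact huv
          · exact huv.symm
          · exact absurd rfl hxy
      refine ⟨⟨Fintype.equivFinOfCardEq hcard2, ?_⟩⟩
      intro a b
      simp only [pathGraph_two_eq_top, top_adj, ne_eq, EmbeddingLike.apply_eq_iff_eq,
        hadjne a b]
    · rintro ⟨f⟩
      have hcard2 : Fintype.card V = 2 := by
        rw [← Fintype.card_fin 2]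
        exact Fintype.card_congr f.toEquiv
      have hadjne : ∀ x y : V, G.Adj x y ↔ x ≠ y := by
        intro x y
        rw [← f.map_rel_iff]
        simp only [pathGraph_two_eq_top, top_adj, ne_eq, EmbeddingLike.apply_eq_iff_eq]
      intro u v _
      have hu := aux_degree_of_adj_ne G hadjne u
      have hv := aux_degree_of_adj_ne G hadjne v
      rw [hcard2] at hu hv
      exact ⟨hu, hv⟩
  · -- right equality case
    have hiff : harmonicIndex G = ((Fintype.card V : ℝ) - 1) * modSecondZagrebIndex G ↔
        ∀ u v : V, G.Adj u v →
          (G.degree u : ℝ) = (Fintype.card V : ℝ) - 1 ∧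
          (G.degree v : ℝ) = (Fintype.card V : ℝ) - 1 := by
      unfold harmonicIndex modSecondZagrebIndex
      rw [Finset.mul_sum, Finset.sum_eq_sum_iff_of_le hle2]
      constructor
      · intro h u v huv
        have := h s(u,v) (hmem.2 huv)
        simp only [Sym2.lift_mk] at this
        exact (rL2eq (hd1 u) (hd1 v) (hdn u) (hdn v)).1 this
      · intro h e he
        induction e using Sym2.ind with
        | _ u v =>
          obtain ⟨ha, hb⟩ := h u v (hmem.1 he)
          simp only [Sym2.lift_mk]
          exact (rL2eq (hd1 u) (hd1 v) (hdn u) (hdn v)).2 ⟨ha, hb⟩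
    rw [hiff]
    constructor
    · intro h
      have hdall : ∀ u : V, G.degree u = Fintype.card V - 1 := by
        intro u
        obtain ⟨v, huv⟩ := aux_exists_adj G hG hn2 u
        have h1 := (h u v huv).1
        have h2 : ((Fintype.card V - 1 : ℕ) : ℝ) = (Fintype.card V : ℝ) - 1 := by
          have : 1 ≤ Fintype.card V := by omega
          push_cast [this]
          ring
        exact_mod_cast h1.trans h2.symm
      have hadjne : ∀ x y : V, G.Adj x y ↔ x ≠ y := by
        intro x y
        constructor
        · exact fun h' => h'.ne
        · intro hxy
          have hsub : G.neighborFinset x ⊆ Finset.univ.erase x := by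
            intro w hw
            exact Finset.mem_erase.2
              ⟨((SimpleGraph.mem_neighborFinset G x w).1 hw).ne', Finset.mem_univ w⟩
          have heq : G.neighborFinset x = Finset.univ.erase x := by
            apply Finset.eq_of_subset_of_card_le hsub
            rw [Finset.card_erase_of_mem (Finset.mem_univ x), Finset.card_univ]
            rw [SimpleGraph.card_neighborFinset_eq_degree, hdall x]
          have : y ∈ G.neighborFinset x := by
            rw [heq]
            exact Finset.mem_erase.2 ⟨Ne.symm hxy, Finset.mem_univ y⟩
          exact (SimpleGraph.mem_neighborFinset G x y).1 this
      refine ⟨⟨Fintype.equivFin V, ?_⟩⟩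
      intro a b
      simp only [completeGraph_eq_top, top_adj, ne_eq, EmbeddingLike.apply_eq_iff_eq,
        hadjne a b]
    · rintro ⟨f⟩
      have hadjne := aux_adj_ne_of_iso_complete G f
      intro u v _
      have hu := aux_degree_of_adj_ne G hadjne u
      have hv := aux_degree_of_adj_ne G hadjne v
      have h2 : ((Fintype.card V - 1 : ℕ) : ℝ) = (Fintype.card V : ℝ) - 1 := by
        have : 1 ≤ Fintype.card V := by omega
        push_cast [this]
        ring
      constructor
      · rw [hu]; exact h2
      · rw [hv]; exact h2
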